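/- Let n₁, n₂, n₃ be unit vectors in ℝ³ and η ∈ (0,1], and suppose pairwise joint measurements G^{ij} of the noisy spin-1/2 observables along n_i and n_j with sharpness η are given for all three pairs. If R₃(ρ) > 1 − η/3 for every qubit density matrix ρ, then √(1 + n₁·n₂) + √(1 + n₁·n₃) + √(1 + n₂·n₃) < √2. (Necessary condition for a state-independent violation of the LSW inequality.) -/

import Mathlib

open Matrix ComplexOrder

noncomputable section

abbrev Mat2 := Matrix (Fin 2) (Fin 2) ℂ

/-- Pauli matrix σ₁. -/
def σ1 : Mat2 := !![0, 1; 1, 0]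
/-- Pauli matrix σ₂. -/
def σ2 : Mat2 := !![0, -Complex.I; Complex.I, 0]
/-- Pauli matrix σ₃. -/
def σ3 : Mat2 := !![1, 0; 0, -1]

/-- σ·a for a real 3-vector a. -/
def pauli (a : Fin 3 → ℝ) : Mat2 := (a 0 : ℂ) • σ1 + (a 1 : ℂ) • σ2 + (a 2 : ℂ) • σ3

/-- Euclidean inner product on ℝ³. -/
def dot3 (a b : Fin 3 → ℝ) : ℝ := a 0 * b 0 + a 1 * b 1 + a 2 * b 2

/-- Euclidean norm on ℝ³. -/
def norm3 (a : Fin 3 → ℝ) : ℝ := Real.sqrt (dot3 a a)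

/-- A qubit effect: both `E` and `I - E` positive semidefinite. -/
def IsEffect (E : Mat2) : Prop := E.PosSemidef ∧ (1 - E).PosSemidef

/-- A qubit density matrix. -/
def IsDensity (ρ : Mat2) : Prop := ρ.PosSemidef ∧ ρ.trace = 1

/-- E₊ = (1/2)(I + η σ·n). -/
def Epos (η : ℝ) (n : Fin 3 → ℝ) : Mat2 := (1/2 : ℂ) • (1 + (η : ℂ) • pauli n)
/-- E₋ = (1/2)(I - η σ·n). -/
def Eneg (η : ℝ) (n : Fin 3 → ℝ) : Mat2 := (1/2 : ℂ) • (1 - (η : ℂ) • pauli n)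

/-- A pairwise joint measurement of the noisy spin-1/2 observables along nᵢ and nⱼ. -/
def IsJointMmt (η : ℝ) (ni nj : Fin 3 → ℝ) (Gpp Gpm Gmp Gmm : Mat2) : Prop :=
  IsEffect Gpp ∧ IsEffect Gpm ∧ IsEffect Gmp ∧ IsEffect Gmm ∧
  Gpp + Gpm = Epos η ni ∧ Gmp + Gmm = Eneg η ni ∧
  Gpp + Gmp = Epos η nj ∧ Gpm + Gmm = Eneg η nj

/-- Average anticorrelation probability R₃(ρ), given the anticorrelation effects of the
three pairwise joint measurements. -/
def R3 (ρ G12pm G12mp G13pm G13mp G23pm G23mp : Mat2) : ℝ :=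
  (1/3) * ((ρ * (G12pm + G12mp)).trace.re + (ρ * (G13pm + G13mp)).trace.re +
    (ρ * (G23pm + G23mp)).trace.re)

/-- Parametric joint-measurement family. -/
def Gpp (η : ℝ) (ni nj : Fin 3 → ℝ) (α : ℝ) (a : Fin 3 → ℝ) : Mat2 :=
  (1/2 : ℂ) • (((α/2 : ℝ) : ℂ) • (1 : Mat2) + pauli ((1/2 : ℝ) • (η • (ni + nj) - a)))
def Gpm (η : ℝ) (ni nj : Fin 3 → ℝ) (α : ℝ) (a : Fin 3 → ℝ) : Mat2 :=
  (1/2 : ℂ) • (((1 - α/2 : ℝ) : ℂ) • (1 : Mat2) + pauli ((1/2 : ℝ) • (η • (ni - nj) + a)))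
def Gmp (η : ℝ) (ni nj : Fin 3 → ℝ) (α : ℝ) (a : Fin 3 → ℝ) : Mat2 :=
  (1/2 : ℂ) • (((1 - α/2 : ℝ) : ℂ) • (1 : Mat2) + pauli ((1/2 : ℝ) • (-(η • ni) + η • nj + a)))
def Gmm (η : ℝ) (ni nj : Fin 3 → ℝ) (α : ℝ) (a : Fin 3 → ℝ) : Mat2 :=
  (1/2 : ℂ) • (((α/2 : ℝ) : ℂ) • (1 : Mat2) + pauli ((1/2 : ℝ) • (-(η • (ni + nj)) - a)))

/-- Trine directions in the ZX plane. -/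
def tn1 : Fin 3 → ℝ := ![0, 0, 1]
def tn2 : Fin 3 → ℝ := ![Real.sqrt 3 / 2, 0, -(1/2)]
def tn3 : Fin 3 → ℝ := ![-(Real.sqrt 3 / 2), 0, -(1/2)]

/-- sign of a Boolean, as ±1. -/
def sgn (b : Bool) : ℝ := if b then 1 else -1

/-- m_X = Σₖ Xₖ nₖ. -/
def mvec {N : ℕ} (n : Fin N → Fin 3 → ℝ) (X : Fin N → Bool) : Fin 3 → ℝ :=
  ∑ k, sgn (X k) • n k

/-- Joint measurability of the N noisy qubit observables. -/
def JointlyMeasurable {N : ℕ} (η : ℝ) (n : Fin N → Fin 3 → ℝ) : Prop :=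
  ∃ E : (Fin N → Bool) → Mat2,
    (∀ X, IsEffect (E X)) ∧ (∑ X, E X) = 1 ∧
    (∀ k, ∑ X ∈ Finset.univ.filter (fun X => X k = true), E X = Epos η (n k)) ∧
    (∀ k, ∑ X ∈ Finset.univ.filter (fun X => X k = false), E X = Eneg η (n k))

/-! At the maximally mixed state `ρ = 1/2` the violation reads `Σ Tr G^{ij}_{++} < η`. In each
pair, `G_{++}` and `G_{--}` are positive with equal traces and Bloch vectors differing by
`η (nᵢ + nⱼ)`, so positivity (`|r| ≤ t`) and the triangle inequality give
`η |nᵢ + nⱼ| ≤ 2 Tr G_{++}`. For unit vectors `|nᵢ + nⱼ| = √2 √(1 + nᵢ·nⱼ)`, and summing over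
the three pairs yields `√2 Σ √(1 + nᵢ·nⱼ) < 2`. -/

lemma pauli_eq (n : Fin 3 → ℝ) :
    pauli n = !![(n 2 : ℂ), n 0 - n 1 * Complex.I; n 0 + n 1 * Complex.I, -(n 2 : ℂ)] := by
  ext i j
  fin_cases i <;> fin_cases j <;> simp [pauli, σ1, σ2, σ3]; ring

lemma trace_Epos (η : ℝ) (n : Fin 3 → ℝ) : (Epos η n).trace = 1 := by
  simp [Epos, pauli_eq, trace_fin_two]

lemma trace_Eneg (η : ℝ) (n : Fin 3 → ℝ) : (Eneg η n).trace = 1 := by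
  simp [Eneg, pauli_eq, trace_fin_two]

/-- The vector `r` of `M = (t • 1 + σ·r) / 2` for Hermitian `M`. -/
def bloch (M : Mat2) : Fin 3 → ℝ :=
  ![2 * (M 0 1).re, -2 * (M 0 1).im, (M 0 0).re - (M 1 1).re]

lemma bloch_add (A B : Mat2) : bloch (A + B) = bloch A + bloch B := by
  ext k; fin_cases k <;> simp [bloch] <;> ring

lemma bloch_sub (A B : Mat2) : bloch (A - B) = bloch A - bloch B := by
  ext k; fin_cases k <;> simp [bloch] <;> ring

lemma bloch_Epos (η : ℝ) (n : Fin 3 → ℝ) : bloch (Epos η n) = η • n := by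
  ext k; fin_cases k <;> simp [bloch, Epos, pauli_eq]; ring

lemma bloch_Eneg (η : ℝ) (n : Fin 3 → ℝ) : bloch (Eneg η n) = -(η • n) := by
  ext k; fin_cases k <;> simp [bloch, Eneg, pauli_eq]; ring

lemma norm3_eq_norm (a : Fin 3 → ℝ) : norm3 a = ‖WithLp.toLp 2 a‖ := by
  simp [norm3, dot3, EuclideanSpace.norm_eq, Fin.sum_univ_three, ← sq]

lemma norm3_sub_le (a b : Fin 3 → ℝ) : norm3 (a - b) ≤ norm3 a + norm3 b := by
  simpa only [norm3_eq_norm, WithLp.toLp_sub] using norm_sub_le _ _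

lemma norm3_smul (c : ℝ) (a : Fin 3 → ℝ) : norm3 (c • a) = |c| * norm3 a := by
  simp only [norm3_eq_norm, WithLp.toLp_smul, norm_smul, Real.norm_eq_abs]

lemma norm3_add_of_norm3_eq_one {a b : Fin 3 → ℝ} (ha : norm3 a = 1) (hb : norm3 b = 1) :
    norm3 (a + b) = √2 * √(1 + dot3 a b) := by
  rw [norm3, Real.sqrt_eq_one] at ha hb
  rw [norm3, ← Real.sqrt_mul zero_le_two]
  congr 1
  simp only [dot3, Pi.add_apply] at ha hb ⊢
  linear_combination ha + hb

/-- `|r|² ≤ t²` is `det M ≥ 0`. -/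
lemma Matrix.PosSemidef.norm3_bloch_le {M : Mat2} (hM : M.PosSemidef) :
    norm3 (bloch M) ≤ M.trace.re := by
  obtain ⟨ha, ha'⟩ := Complex.nonneg_iff.mp (hM.diag_nonneg (i := 0))
  obtain ⟨hd, hd'⟩ := Complex.nonneg_iff.mp (hM.diag_nonneg (i := 1))
  have hdet := (Complex.nonneg_iff.mp hM.det_nonneg).1
  rw [det_fin_two, ← hM.isHermitian.apply 1 0] at hdet
  simp only [Complex.sub_re, Complex.mul_re, Complex.star_def, Complex.conj_re,
    Complex.conj_im, ← ha', ← hd'] at hdet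
  rw [norm3, Real.sqrt_le_iff, trace_fin_two, Complex.add_re]
  refine ⟨by positivity, ?_⟩
  simp only [dot3, bloch, Matrix.cons_val]
  nlinarith

namespace IsJointMmt

variable {η : ℝ} {ni nj : Fin 3 → ℝ} {Gpp Gpm Gmp Gmm : Mat2}

lemma re_trace_pm_add_mp (h : IsJointMmt η ni nj Gpp Gpm Gmp Gmm) :
    (Gpm + Gmp).trace.re = 2 - 2 * Gpp.trace.re := by
  obtain ⟨-, -, -, -, hi, -, hj, -⟩ := h
  rw [eq_sub_of_add_eq' hi, eq_sub_of_add_eq' hj]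
  simp only [trace_add, trace_sub, trace_Epos, Complex.add_re, Complex.sub_re, Complex.one_re]
  ring

lemma mm_eq_Eneg_sub_Epos_add (h : IsJointMmt η ni nj Gpp Gpm Gmp Gmm) :
    Gmm = Eneg η nj - Epos η ni + Gpp := by
  obtain ⟨-, -, -, -, hi, -, -, hj⟩ := h
  rw [eq_sub_of_add_eq' hj, eq_sub_of_add_eq' hi]
  abel

lemma bloch_pp_sub_bloch_mm (h : IsJointMmt η ni nj Gpp Gpm Gmp Gmm) :
    bloch Gpp - bloch Gmm = η • (ni + nj) := by
  rw [h.mm_eq_Eneg_sub_Epos_add, bloch_add, bloch_sub, bloch_Epos, bloch_Eneg, smul_add]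
  abel

lemma trace_mm_eq_trace_pp (h : IsJointMmt η ni nj Gpp Gpm Gmp Gmm) :
    Gmm.trace = Gpp.trace := by
  rw [h.mm_eq_Eneg_sub_Epos_add, trace_add, trace_sub, trace_Epos, trace_Eneg, sub_self,
    zero_add]

lemma mul_norm3_add_le (h : IsJointMmt η ni nj Gpp Gpm Gmp Gmm) (hη : 0 ≤ η) :
    η * norm3 (ni + nj) ≤ 2 * Gpp.trace.re :=
  calc η * norm3 (ni + nj) = norm3 (bloch Gpp - bloch Gmm) := by
        rw [h.bloch_pp_sub_bloch_mm, norm3_smul, abs_of_nonneg hη]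
    _ ≤ norm3 (bloch Gpp) + norm3 (bloch Gmm) := norm3_sub_le _ _
    _ ≤ Gpp.trace.re + Gmm.trace.re :=
        add_le_add h.1.1.norm3_bloch_le h.2.2.2.1.1.norm3_bloch_le
    _ = 2 * Gpp.trace.re := by rw [h.trace_mm_eq_trace_pp]; ring

end IsJointMmt

lemma isDensity_half_smul_one : IsDensity ((1 / 2 : ℂ) • 1) := by
  refine ⟨PosSemidef.one.smul (by rw [Complex.nonneg_iff]; norm_num), ?_⟩
  rw [trace_smul, trace_one]
  norm_num

lemma R3_half_smul_one (A B C D E F : Mat2) :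
    R3 ((1 / 2 : ℂ) • 1) A B C D E F =
      ((A + B).trace.re + (C + D).trace.re + (E + F).trace.re) / 6 := by
  simp only [R3, smul_mul_assoc, one_mul, trace_smul, smul_eq_mul, Complex.mul_re]
  norm_num
  ring

/-- Necessary condition for a state-independent violation of the LSW inequality:
if R₃(ρ) > 1 - η/3 for every qubit density matrix ρ, then
√(1 + n₁·n₂) + √(1 + n₁·n₃) + √(1 + n₂·n₃) < √2. -/
theorem necessary_condition_state_independent
    (n₁ n₂ n₃ : Fin 3 → ℝ) (h1 : norm3 n₁ = 1) (h2 : norm3 n₂ = 1) (h3 : norm3 n₃ = 1)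
    (η : ℝ) (hη : η ∈ Set.Ioc (0 : ℝ) 1)
    (G12pp G12pm G12mp G12mm G13pp G13pm G13mp G13mm G23pp G23pm G23mp G23mm : Mat2)
    (h12 : IsJointMmt η n₁ n₂ G12pp G12pm G12mp G12mm)
    (h13 : IsJointMmt η n₁ n₃ G13pp G13pm G13mp G13mm)
    (h23 : IsJointMmt η n₂ n₃ G23pp G23pm G23mp G23mm)
    (hviol : ∀ ρ : Mat2, IsDensity ρ →
      R3 ρ G12pm G12mp G13pm G13mp G23pm G23mp > 1 - η / 3) :
    Real.sqrt (1 + dot3 n₁ n₂) + Real.sqrt (1 + dot3 n₁ n₃) + Real.sqrt (1 + dot3 n₂ n₃)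
      < Real.sqrt 2 := by
  have hη0 : 0 ≤ η := hη.1.le
  have hsum : G12pp.trace.re + G13pp.trace.re + G23pp.trace.re < η := by
    have hR := hviol _ isDensity_half_smul_one
    rw [R3_half_smul_one, h12.re_trace_pm_add_mp, h13.re_trace_pm_add_mp,
      h23.re_trace_pm_add_mp] at hR
    linarith
  have hbound := add_le_add (add_le_add (h12.mul_norm3_add_le hη0)
    (h13.mul_norm3_add_le hη0)) (h23.mul_norm3_add_le hη0)
  rw [norm3_add_of_norm3_eq_one h1 h2, norm3_add_of_norm3_eq_one h1 h3,
    norm3_add_of_norm3_eq_one h2 h3] at hbound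
  have hη2 : η * (√2 * (√(1 + dot3 n₁ n₂) + √(1 + dot3 n₁ n₃) + √(1 + dot3 n₂ n₃)))
      < η * (√2 * √2) := by
    rw [Real.mul_self_sqrt zero_le_two]
    linarith
  exact lt_of_mul_lt_mul_left (lt_of_mul_lt_mul_left hη2 hη0) (Real.sqrt_nonneg 2)
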